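/- If P : E → E is a continuous n-homogeneous polynomial on a finite-dimensional Banach space E and p ≤ 2, then P is almost p-summing at every point of E. -/

import Mathlib

open MeasureTheory Filter Finset

/-- The weak ℓ_q norm of a finite family: `sup_{‖φ‖≤1} (∑ |φ x_j|^q)^{1/q}`. -/
noncomputable def weakNorm {E : Type*} [NormedAddCommGroup E] [NormedSpace ℝ E]
    (q : ℝ) {k : ℕ} (x : Fin k → E) : ℝ :=
  sSup {s : ℝ | ∃ φ : E →L[ℝ] ℝ, ‖φ‖ ≤ 1 ∧ s = (∑ j, |φ (x j)| ^ q) ^ (1 / q)}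

/-- The weak ℓ_q norm of a sequence. -/
noncomputable def weakNormSeq {E : Type*} [NormedAddCommGroup E] [NormedSpace ℝ E]
    (q : ℝ) (x : ℕ → E) : ℝ :=
  sSup {s : ℝ | ∃ φ : E →L[ℝ] ℝ, ‖φ‖ ≤ 1 ∧ s = (∑' j, |φ (x j)| ^ q) ^ (1 / q)}

/-- Unconditionally q-summable sequences: weakly q-summable with weak norms of tails → 0. -/
def UncondSummable {E : Type*} [NormedAddCommGroup E] [NormedSpace ℝ E]
    (q : ℝ) (x : ℕ → E) : Prop :=
  (∀ φ : E →L[ℝ] ℝ, Summable fun j => |φ (x j)| ^ q) ∧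
    Tendsto (fun m => weakNormSeq q fun j => x (j + m)) atTop (nhds 0)

/-- The Rademacher functions on [0,1]. -/
noncomputable def rademacher (j : ℕ) (t : ℝ) : ℝ :=
  if Int.fract ((2 : ℝ) ^ j * t) < 1 / 2 then 1 else -1

/-- `(∫_0^1 ‖∑_j r_j(t) y_j‖² dt)^{1/2}` for a finite family `y` in `F`. -/
noncomputable def radNorm {F : Type*} [NormedAddCommGroup F] [NormedSpace ℝ F]
    {k : ℕ} (y : Fin k → F) : ℝ :=
  (∫ t in (0:ℝ)..1, ‖∑ j : Fin k, rademacher (j : ℕ) t • y j‖ ^ 2) ^ ((1:ℝ) / 2)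

/-- `f` is almost p-summing at `a`. -/
def AlmostSummingAt {E F : Type*} [NormedAddCommGroup E] [NormedSpace ℝ E]
    [NormedAddCommGroup F] [NormedSpace ℝ F] (p : ℝ) (f : E → F) (a : E) : Prop :=
  ∃ C > 0, ∃ ε > 0, ∃ r > 0, ∀ (k : ℕ) (x : Fin k → E), weakNorm p x < ε →
    radNorm (fun j => f (a + x j) - f a) ≤ C * weakNorm p x ^ r

/-- `f` is absolutely (p,q)-summing at `a`. -/
def AbsSummingAt {E F : Type*} [NormedAddCommGroup E] [NormedSpace ℝ E]
    [NormedAddCommGroup F] [NormedSpace ℝ F] (p q : ℝ) (f : E → F) (a : E) : Prop :=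
  ∃ M > 0, ∃ δ > 0, ∃ r > 0, ∀ (k : ℕ) (x : Fin k → E), weakNorm q x < δ →
    (∑ j, ‖f (a + x j) - f a‖ ^ p) ≤ M * weakNorm q x ^ r


/-!
Near `a` a `C¹` map is Lipschitz, so the increments `y_j = f (a + x_j) - f a` satisfy
`‖y_j‖ ≤ L ‖x_j‖`, and it suffices to bound `radNorm y` by `(∑ ‖y_j‖²)^{1/2}` and the latter by
the weak `ℓ_p` norm of `x`.

For `i < j` the product `r_i r_j` is antiperiodic with antiperiod `2^{-(i+1)}`, so the Rademacher
functions are orthonormal on `[0, 1]`; in a Hilbert space this gives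
`∫ ‖∑ r_j y_j‖² = ∑ ‖y_j‖²`, and any finite-dimensional space is isomorphic to a Euclidean one.
In finite dimension the weak and strong `ℓ_p` norms are equivalent (test against coordinate
functionals), and for `p ≤ 2` one has `∑ ‖x_j‖² ≤ (max ‖x_j‖)^{2-p} ∑ ‖x_j‖^p`, which bounds
`∑ ‖x_j‖²` by a multiple of the squared weak `ℓ_p` norm.
-/

open Function

theorem Function.Antiperiodic.intervalIntegral_eq_zero {E : Type*} [NormedAddCommGroup E]
    [NormedSpace ℝ E] {f : ℝ → E} {c T : ℝ} (hc : Antiperiodic f c) (hT : Periodic f T)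
    (t : ℝ) : ∫ x in t..t + T, f x = 0 := by
  have := IsAddTorsionFree.of_isTorsionFree ℝ E
  refine self_eq_neg.1 ?_
  calc ∫ x in t..t + T, f x = ∫ x in t + c..t + c + T, f x := hT.intervalIntegral_add_eq t _
    _ = ∫ x in t..t + T, f (x + c) := by
      rw [intervalIntegral.integral_comp_add_right, add_right_comm]
    _ = -∫ x in t..t + T, f x := by
      rw [← intervalIntegral.integral_neg]
      exact intervalIntegral.integral_congr fun x _ => hc x

noncomputable def squareWave (u : ℝ) : ℝ := if Int.fract u < 1 / 2 then 1 else -1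

theorem squareWave_periodic : Periodic squareWave 1 := by
  intro u
  simp only [squareWave, Int.fract_add_one]

theorem squareWave_antiperiodic : Antiperiodic squareWave (1 / 2) := by
  intro u
  have h0 := Int.fract_nonneg u
  have h1 := Int.fract_lt_one u
  unfold squareWave
  by_cases hu : Int.fract u < 1 / 2
  · have : Int.fract (u + 1 / 2) = Int.fract u + 1 / 2 :=
      Int.fract_eq_iff.2 ⟨by linarith, by linarith, ⌊u⌋, by rw [← Int.self_sub_fract]; ring⟩
    rw [this, if_neg (by linarith), if_pos hu]
  · have : Int.fract (u + 1 / 2) = Int.fract u - 1 / 2 :=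
      Int.fract_eq_iff.2 ⟨by linarith, by linarith, ⌊u⌋ + 1, by
        push_cast; rw [← Int.self_sub_fract]; ring⟩
    rw [this, if_pos (by linarith), if_neg hu, neg_neg]

theorem squareWave_mul_self (u : ℝ) : squareWave u * squareWave u = 1 := by
  unfold squareWave; split_ifs <;> norm_num

theorem abs_squareWave (u : ℝ) : |squareWave u| = 1 := by
  unfold squareWave; split_ifs <;> norm_num

theorem measurable_squareWave : Measurable squareWave :=
  Measurable.ite (measurableSet_lt measurable_fract measurable_const) measurable_const
    measurable_const

theorem rademacher_periodic {m j : ℕ} (h : m ≤ j) : Periodic (rademacher j) (2 ^ m)⁻¹ := by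
  obtain ⟨d, rfl⟩ := Nat.exists_eq_add_of_le h
  have h := (squareWave_periodic.nat_mul (2 ^ d)).const_mul ((2 : ℝ) ^ (m + d))
  rwa [show ((2 : ℝ) ^ (m + d))⁻¹ * ((2 ^ d : ℕ) * 1) = (2 ^ m)⁻¹ by
    push_cast; rw [pow_add]; field_simp] at h

theorem rademacher_antiperiodic (j : ℕ) : Antiperiodic (rademacher j) (2 ^ (j + 1))⁻¹ := by
  have h := squareWave_antiperiodic.const_mul (pow_ne_zero j (two_ne_zero (α := ℝ)))
  rwa [show ((2 : ℝ) ^ j)⁻¹ * (1 / 2) = (2 ^ (j + 1))⁻¹ by rw [pow_succ]; field_simp] at h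

theorem rademacher_mul_self (j : ℕ) (t : ℝ) : rademacher j t * rademacher j t = 1 :=
  squareWave_mul_self _

theorem abs_rademacher (j : ℕ) (t : ℝ) : |rademacher j t| = 1 := abs_squareWave _

theorem measurable_rademacher (j : ℕ) : Measurable (rademacher j) :=
  measurable_squareWave.comp (measurable_const_mul _)

theorem integral_rademacher_mul_rademacher_of_lt {i j : ℕ} (h : i < j) :
    ∫ t in (0 : ℝ)..1, rademacher i t * rademacher j t = 0 := by
  have hanti : Antiperiodic (fun t => rademacher i t * rademacher j t) (2 ^ (i + 1))⁻¹ :=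
    fun t => by simp only [rademacher_antiperiodic i t, rademacher_periodic h t, neg_mul]
  have hper : Periodic (fun t => rademacher i t * rademacher j t) 1 := by
    simpa using (rademacher_periodic (Nat.zero_le i)).mul (rademacher_periodic (Nat.zero_le j))
  simpa using hanti.intervalIntegral_eq_zero hper 0

theorem integral_rademacher_mul_rademacher (i j : ℕ) :
    ∫ t in (0 : ℝ)..1, rademacher i t * rademacher j t = if i = j then 1 else 0 := by
  rcases lt_trichotomy i j with h | rfl | h
  · rw [if_neg h.ne, integral_rademacher_mul_rademacher_of_lt h]
  · simp [rademacher_mul_self]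
  · simp_rw [if_neg h.ne', mul_comm (rademacher i _)]
    exact integral_rademacher_mul_rademacher_of_lt h

theorem intervalIntegrable_of_norm_le {G : Type*} [NormedAddCommGroup G] {f : ℝ → G}
    (hf : AEStronglyMeasurable f volume) {C : ℝ} (hC : ∀ t, ‖f t‖ ≤ C) (a b : ℝ) :
    IntervalIntegrable f volume a b :=
  intervalIntegrable_const.mono_fun' hf.restrict (ae_of_all _ hC)

section RademacherSum

variable {F G : Type*} [NormedAddCommGroup F] [NormedSpace ℝ F] [NormedAddCommGroup G]
  [NormedSpace ℝ G] {k : ℕ}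

theorem norm_sum_rademacher_smul_le (y : Fin k → F) (t : ℝ) :
    ‖∑ j : Fin k, rademacher j t • y j‖ ≤ ∑ j, ‖y j‖ :=
  (norm_sum_le _ _).trans_eq <| by simp only [norm_smul, Real.norm_eq_abs, abs_rademacher, one_mul]

theorem intervalIntegrable_norm_sum_rademacher_smul_sq (y : Fin k → F) (a b : ℝ) :
    IntervalIntegrable (fun t => ‖∑ j : Fin k, rademacher j t • y j‖ ^ 2) volume a b := by
  refine intervalIntegrable_of_norm_le ?_ (C := (∑ j, ‖y j‖) ^ 2) (fun t => ?_) a b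
  · refine (Finset.aestronglyMeasurable_fun_sum _ fun j _ => ?_).norm.pow 2
    exact ((measurable_rademacher j).stronglyMeasurable.smul_const (y j)).aestronglyMeasurable
  · rw [norm_pow, norm_norm]
    gcongr
    exact norm_sum_rademacher_smul_le y t

theorem integral_norm_sum_rademacher_smul_sq {H : Type*} [NormedAddCommGroup H]
    [InnerProductSpace ℝ H] (y : Fin k → H) :
    ∫ t in (0 : ℝ)..1, ‖∑ j : Fin k, rademacher j t • y j‖ ^ 2 = ∑ j, ‖y j‖ ^ 2 := by
  have hint (i j : Fin k) :
      IntervalIntegrable (fun t => rademacher i t * rademacher j t) volume 0 1 :=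
    intervalIntegrable_of_norm_le
      ((measurable_rademacher i).mul (measurable_rademacher j)).aestronglyMeasurable
      (C := 1) (fun t => by simp [abs_rademacher]) 0 1
  have hexpand (t : ℝ) : ‖∑ j : Fin k, rademacher j t • y j‖ ^ 2 =
      ∑ i : Fin k, ∑ j : Fin k, (rademacher i t * rademacher j t) * inner ℝ (y j) (y i) := by
    simp only [← real_inner_self_eq_norm_sq, sum_inner, inner_sum, real_inner_smul_left,
      real_inner_smul_right, mul_assoc]
  simp_rw [hexpand]
  rw [intervalIntegral.integral_finsetSum fun i _ => by
    simpa only [Finset.sum_fn] using IntervalIntegrable.sum _ fun j _ => (hint i j).mul_const _]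
  refine Finset.sum_congr rfl fun i _ => ?_
  rw [intervalIntegral.integral_finsetSum fun j _ => (hint i j).mul_const _]
  simp [intervalIntegral.integral_mul_const, integral_rademacher_mul_rademacher, Fin.val_inj]

theorem radNorm_eq_sqrt {H : Type*} [NormedAddCommGroup H] [InnerProductSpace ℝ H]
    (y : Fin k → H) : radNorm y = √(∑ j, ‖y j‖ ^ 2) := by
  rw [radNorm, integral_norm_sum_rademacher_smul_sq, Real.sqrt_eq_rpow]

theorem radNorm_map_le (g : F →L[ℝ] G) (y : Fin k → F) :
    radNorm (fun j => g (y j)) ≤ ‖g‖ * radNorm y := by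
  have hpt (t : ℝ) : ‖∑ j : Fin k, rademacher j t • g (y j)‖ ^ 2 ≤
      ‖g‖ ^ 2 * ‖∑ j : Fin k, rademacher j t • y j‖ ^ 2 := by
    simp only [← map_smul, ← map_sum, ← mul_pow]
    gcongr
    exact g.le_opNorm _
  have hmono := intervalIntegral.integral_mono_on zero_le_one
    (intervalIntegrable_norm_sum_rademacher_smul_sq _ 0 1)
    ((intervalIntegrable_norm_sum_rademacher_smul_sq y 0 1).const_mul (‖g‖ ^ 2))
    fun t _ => hpt t
  rw [intervalIntegral.integral_const_mul] at hmono
  simp only [radNorm, ← Real.sqrt_eq_rpow]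
  calc √(∫ t in (0 : ℝ)..1, ‖∑ j : Fin k, rademacher j t • g (y j)‖ ^ 2)
      ≤ √(‖g‖ ^ 2 * ∫ t in (0 : ℝ)..1, ‖∑ j : Fin k, rademacher j t • y j‖ ^ 2) :=
        Real.sqrt_le_sqrt hmono
    _ = ‖g‖ * √(∫ t in (0 : ℝ)..1, ‖∑ j : Fin k, rademacher j t • y j‖ ^ 2) := by
        rw [Real.sqrt_mul (by positivity), Real.sqrt_sq (norm_nonneg g)]

end RademacherSum

theorem exists_radNorm_le_mul_sqrt (F : Type*) [NormedAddCommGroup F] [NormedSpace ℝ F]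
    [FiniteDimensional ℝ F] :
    ∃ C, 0 ≤ C ∧ ∀ (k : ℕ) (y : Fin k → F), radNorm y ≤ C * √(∑ j, ‖y j‖ ^ 2) := by
  let e : F ≃L[ℝ] EuclideanSpace ℝ (Fin (Module.finrank ℝ F)) :=
    ContinuousLinearEquiv.ofFinrankEq finrank_euclideanSpace_fin.symm
  refine ⟨‖e.symm.toContinuousLinearMap‖ * ‖e.toContinuousLinearMap‖,
    mul_nonneg (norm_nonneg _) (norm_nonneg _), fun k y => ?_⟩
  have hsum : √(∑ j, ‖e (y j)‖ ^ 2) ≤ ‖e.toContinuousLinearMap‖ * √(∑ j, ‖y j‖ ^ 2) := by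
    rw [← Real.sqrt_sq (norm_nonneg e.toContinuousLinearMap), ← Real.sqrt_mul (sq_nonneg _),
      Finset.mul_sum]
    gcongr with j
    rw [← mul_pow]
    gcongr
    exact e.toContinuousLinearMap.le_opNorm _
  calc radNorm y = radNorm fun j => e.symm.toContinuousLinearMap (e (y j)) := by simp
    _ ≤ ‖e.symm.toContinuousLinearMap‖ * radNorm fun j => e (y j) := radNorm_map_le _ _
    _ ≤ _ := by
      rw [radNorm_eq_sqrt, mul_assoc]
      gcongr

section WeakNorm

variable {E : Type*} [NormedAddCommGroup E] [NormedSpace ℝ E] {p : ℝ} {k : ℕ}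

theorem weakNorm_nonneg (x : Fin k → E) : 0 ≤ weakNorm p x :=
  Real.sSup_nonneg <| by
    rintro s ⟨φ, -, rfl⟩
    exact Real.rpow_nonneg (Finset.sum_nonneg fun j _ => Real.rpow_nonneg (abs_nonneg _) _) _

theorem le_weakNorm (hp : 0 ≤ p) (x : Fin k → E) {φ : E →L[ℝ] ℝ} (hφ : ‖φ‖ ≤ 1) :
    (∑ j, |φ (x j)| ^ p) ^ (1 / p) ≤ weakNorm p x := by
  refine le_csSup ⟨(∑ j, ‖x j‖ ^ p) ^ (1 / p), ?_⟩ ⟨φ, hφ, rfl⟩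
  rintro s ⟨ψ, hψ, rfl⟩
  gcongr with j
  exact (ψ.le_opNorm _).trans (mul_le_of_le_one_left (norm_nonneg _) hψ)

theorem sum_abs_rpow_le_weakNorm_rpow (hp : 0 < p) (x : Fin k → E) {φ : E →L[ℝ] ℝ}
    (hφ : ‖φ‖ ≤ 1) : ∑ j, |φ (x j)| ^ p ≤ weakNorm p x ^ p := by
  have hS : 0 ≤ ∑ j, |φ (x j)| ^ p := Finset.sum_nonneg fun j _ => by positivity
  calc ∑ j, |φ (x j)| ^ p = ((∑ j, |φ (x j)| ^ p) ^ (1 / p)) ^ p := by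
        rw [one_div, Real.rpow_inv_rpow hS hp.ne']
    _ ≤ weakNorm p x ^ p := by gcongr; exact le_weakNorm hp.le x hφ

theorem sum_abs_rpow_le_opNorm_rpow_mul (hp : 0 < p) (x : Fin k → E) (φ : E →L[ℝ] ℝ) :
    ∑ j, |φ (x j)| ^ p ≤ ‖φ‖ ^ p * weakNorm p x ^ p := by
  rcases eq_or_ne φ 0 with rfl | hφ
  · simp [Real.zero_rpow hp.ne']
  have hφ' : 0 < ‖φ‖ := norm_pos_iff.2 hφ
  have hψ : ‖‖φ‖⁻¹ • φ‖ ≤ 1 := by rw [norm_smul, norm_inv, norm_norm, inv_mul_cancel₀ hφ'.ne']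
  calc ∑ j, |φ (x j)| ^ p = ‖φ‖ ^ p * ∑ j, |(‖φ‖⁻¹ • φ) (x j)| ^ p := by
        rw [Finset.mul_sum]
        refine Finset.sum_congr rfl fun j _ => ?_
        rw [smul_apply, smul_eq_mul, abs_mul, abs_inv, abs_norm,
          Real.mul_rpow (by positivity) (abs_nonneg _), ← mul_assoc,
          ← Real.mul_rpow hφ'.le (by positivity), mul_inv_cancel₀ hφ'.ne', Real.one_rpow, one_mul]
    _ ≤ ‖φ‖ ^ p * weakNorm p x ^ p := by
        gcongr; exact sum_abs_rpow_le_weakNorm_rpow hp x hψ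

end WeakNorm

theorem pi_norm_rpow_le_sum_rpow {ι : Type*} [Fintype ι] {p : ℝ} (hp : 0 < p) (w : ι → ℝ) :
    ‖w‖ ^ p ≤ ∑ i, |w i| ^ p := by
  have hS : 0 ≤ ∑ i, |w i| ^ p := Finset.sum_nonneg fun i _ => by positivity
  have hw : ‖w‖ ≤ (∑ i, |w i| ^ p) ^ p⁻¹ := by
    refine (pi_norm_le_iff_of_nonneg (by positivity)).2 fun i => ?_
    rw [Real.norm_eq_abs, ← Real.rpow_rpow_inv (abs_nonneg (w i)) hp.ne']
    gcongr
    exact Finset.single_le_sum (f := fun i => |w i| ^ p) (fun i _ => by positivity)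
      (Finset.mem_univ i)
  calc ‖w‖ ^ p ≤ ((∑ i, |w i| ^ p) ^ p⁻¹) ^ p := by gcongr
    _ = ∑ i, |w i| ^ p := Real.rpow_inv_rpow hS hp.ne'

theorem exists_sum_norm_rpow_le_mul_weakNorm_rpow (E : Type*) [NormedAddCommGroup E]
    [NormedSpace ℝ E] [FiniteDimensional ℝ E] {p : ℝ} (hp : 0 < p) :
    ∃ K, 0 ≤ K ∧ ∀ (k : ℕ) (x : Fin k → E), ∑ j, ‖x j‖ ^ p ≤ K * weakNorm p x ^ p := by
  let e := (Module.finBasis ℝ E).equivFunL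
  let ψ i : E →L[ℝ] ℝ := (ContinuousLinearMap.proj i).comp e.toContinuousLinearMap
  set c := ‖e.symm.toContinuousLinearMap‖
  refine ⟨c ^ p * ∑ i, ‖ψ i‖ ^ p, by positivity, fun k x => ?_⟩
  have hpt (v : E) : ‖v‖ ^ p ≤ c ^ p * ∑ i, |ψ i v| ^ p :=
    calc ‖v‖ ^ p = ‖e.symm.toContinuousLinearMap (e v)‖ ^ p := by simp
      _ ≤ (c * ‖e v‖) ^ p := by gcongr; exact ContinuousLinearMap.le_opNorm _ _
      _ = c ^ p * ‖e v‖ ^ p := Real.mul_rpow (norm_nonneg _) (norm_nonneg _)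
      _ ≤ c ^ p * ∑ i, |ψ i v| ^ p := by gcongr; exact pi_norm_rpow_le_sum_rpow hp (e v)
  calc ∑ j, ‖x j‖ ^ p ≤ ∑ j, c ^ p * ∑ i, |ψ i (x j)| ^ p := Finset.sum_le_sum fun j _ => hpt _
    _ = c ^ p * ∑ i, ∑ j, |ψ i (x j)| ^ p := by rw [← Finset.mul_sum, Finset.sum_comm]
    _ ≤ c ^ p * ∑ i, ‖ψ i‖ ^ p * weakNorm p x ^ p := by
      gcongr with i
      exact sum_abs_rpow_le_opNorm_rpow_mul hp x (ψ i)
    _ = c ^ p * (∑ i, ‖ψ i‖ ^ p) * weakNorm p x ^ p := by rw [← Finset.sum_mul, mul_assoc]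

theorem sq_le_rpow_mul_rpow {a b p : ℝ} (ha : 0 ≤ a) (hab : a ≤ b) (hp2 : p ≤ 2) :
    a ^ 2 ≤ a ^ p * b ^ (2 - p) := by
  rcases ha.eq_or_lt with rfl | ha
  · rw [zero_pow two_ne_zero]
    exact mul_nonneg (Real.rpow_nonneg le_rfl _) (Real.rpow_nonneg (ha.trans hab) _)
  calc a ^ 2 = a ^ p * a ^ (2 - p) := by
        rw [← Real.rpow_add ha, add_sub_cancel, Real.rpow_two]
    _ ≤ a ^ p * b ^ (2 - p) := by gcongr

theorem exists_sum_norm_sq_le_mul_weakNorm_sq (E : Type*) [NormedAddCommGroup E]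
    [NormedSpace ℝ E] [FiniteDimensional ℝ E] {p : ℝ} (hp : 0 < p) (hp2 : p ≤ 2) :
    ∃ M, 0 ≤ M ∧ ∀ (k : ℕ) (x : Fin k → E), ∑ j, ‖x j‖ ^ 2 ≤ M * weakNorm p x ^ 2 := by
  obtain ⟨K, hK, hKx⟩ := exists_sum_norm_rpow_le_mul_weakNorm_rpow E hp
  refine ⟨(K ^ (1 / p)) ^ (2 - p) * K, by positivity, fun k x => ?_⟩
  set W := weakNorm p x
  have hW : 0 ≤ W := weakNorm_nonneg x
  have hxj (j : Fin k) : ‖x j‖ ≤ K ^ (1 / p) * W := by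
    have h : ‖x j‖ ^ p ≤ K * W ^ p :=
      (Finset.single_le_sum (f := fun j => ‖x j‖ ^ p) (fun j _ => by positivity)
        (Finset.mem_univ j)).trans (hKx k x)
    calc ‖x j‖ = (‖x j‖ ^ p) ^ (1 / p) := by
          rw [one_div, Real.rpow_rpow_inv (norm_nonneg _) hp.ne']
      _ ≤ (K * W ^ p) ^ (1 / p) := by gcongr
      _ = K ^ (1 / p) * W := by
          rw [Real.mul_rpow hK (by positivity), one_div, Real.rpow_rpow_inv hW hp.ne']
  calc ∑ j, ‖x j‖ ^ 2 ≤ ∑ j, ‖x j‖ ^ p * (K ^ (1 / p) * W) ^ (2 - p) :=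
        Finset.sum_le_sum fun j _ => sq_le_rpow_mul_rpow (norm_nonneg _) (hxj j) hp2
    _ = (K ^ (1 / p) * W) ^ (2 - p) * ∑ j, ‖x j‖ ^ p := by rw [Finset.mul_sum]; simp [mul_comm]
    _ ≤ (K ^ (1 / p) * W) ^ (2 - p) * (K * W ^ p) := by gcongr; exact hKx k x
    _ = (K ^ (1 / p)) ^ (2 - p) * K * W ^ 2 := by
        have hW2 : W ^ (2 - p) * W ^ p = W ^ 2 := by
          rw [← Real.rpow_add' hW (by norm_num), sub_add_cancel, Real.rpow_two]
        rw [Real.mul_rpow (by positivity) hW, ← hW2]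
        ring

open scoped NNReal in
theorem almostSummingAt_of_lipschitzOnWith {E F : Type*} [NormedAddCommGroup E]
    [NormedSpace ℝ E] [FiniteDimensional ℝ E] [NormedAddCommGroup F] [NormedSpace ℝ F]
    [FiniteDimensional ℝ F] {p : ℝ} (hp : 0 < p) (hp2 : p ≤ 2) {f : E → F} {a : E}
    {L : ℝ≥0} {s : Set E} (hs : s ∈ nhds a) (hf : LipschitzOnWith L f s) :
    AlmostSummingAt p f a := by
  obtain ⟨C, hC, hrad⟩ := exists_radNorm_le_mul_sqrt F
  obtain ⟨M, hM, hsq⟩ := exists_sum_norm_sq_le_mul_weakNorm_sq E hp hp2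
  obtain ⟨δ, hδ, hball⟩ := Metric.mem_nhds_iff.1 hs
  refine ⟨C * L * √M + 1, by positivity, δ / (√M + 1), by positivity, 1, one_pos,
    fun k x hx => ?_⟩
  set W := weakNorm p x
  have hW : 0 ≤ W := weakNorm_nonneg x
  have hsqW : √(M * W ^ 2) = √M * W := by rw [Real.sqrt_mul hM, Real.sqrt_sq hW]
  have hxj (j : Fin k) : ‖x j‖ ≤ √M * W := by
    rw [← hsqW, ← Real.sqrt_sq (norm_nonneg (x j))]
    exact Real.sqrt_le_sqrt <| (Finset.single_le_sum (f := fun j => ‖x j‖ ^ 2)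
      (fun j _ => by positivity) (Finset.mem_univ j)).trans (hsq k x)
  have hlt : √M * W < δ :=
    calc √M * W ≤ √M * (δ / (√M + 1)) := by gcongr
      _ < δ := by rw [mul_div_assoc', div_lt_iff₀ (by positivity)]; nlinarith
  have hmem (j : Fin k) : a + x j ∈ s := hball (by simpa using (hxj j).trans_lt hlt)
  have hy (j : Fin k) : ‖f (a + x j) - f a‖ ≤ L * ‖x j‖ := by
    simpa using hf.norm_sub_le (hmem j) (mem_of_mem_nhds hs)
  calc radNorm (fun j => f (a + x j) - f a)
      ≤ C * √(∑ j, ‖f (a + x j) - f a‖ ^ 2) := hrad k _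
    _ ≤ C * √(L ^ 2 * (M * W ^ 2)) := by
      gcongr
      calc ∑ j, ‖f (a + x j) - f a‖ ^ 2 ≤ ∑ j, L ^ 2 * ‖x j‖ ^ 2 := by
            gcongr with j; rw [← mul_pow]; gcongr; exact hy j
        _ ≤ L ^ 2 * (M * W ^ 2) := by rw [← Finset.mul_sum]; gcongr; exact hsq k x
    _ = C * L * √M * W := by
      rw [Real.sqrt_mul (by positivity), Real.sqrt_sq L.coe_nonneg, hsqW]; ring
    _ ≤ (C * L * √M + 1) * W ^ 1 := by rw [pow_one]; nlinarith

theorem stmt10_general {E : Type*} [NormedAddCommGroup E] [NormedSpace ℝ E]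
    [FiniteDimensional ℝ E]
    (p : ℝ) (hp1 : 1 ≤ p) (hp2 : p ≤ 2) (n : ℕ)
    (T : ContinuousMultilinearMap ℝ (fun _ : Fin n => E) E) :
    ∀ a : E, AlmostSummingAt p (fun x => T fun _ => x) a := by
  intro a
  have hT : ContDiff ℝ 1 fun x : E => T fun _ => x :=
    T.contDiff.comp (contDiff_pi.2 fun _ => contDiff_id)
  obtain ⟨L, s, hs, hL⟩ := hT.contDiffAt.exists_lipschitzOnWith
  exact almostSummingAt_of_lipschitzOnWith (by linarith) hp2 hs hL

theorem stmt10 {E : Type*} [NormedAddCommGroup E] [NormedSpace ℝ E]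
    [FiniteDimensional ℝ E]
    (p : ℝ) (hp1 : 1 ≤ p) (hp2 : p ≤ 2) (n : ℕ) (hn : 1 ≤ n)
    (T : ContinuousMultilinearMap ℝ (fun _ : Fin n => E) E) :
    ∀ a : E, AlmostSummingAt p (fun x => T fun _ => x) a :=
  stmt10_general p hp1 hp2 n T
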